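/- Let K be a propositional base and ∼ a Maximal Consistency Relation of K. Then every element of OM(∼) is an a-minimal o-model of K, where OM(∼) = {μ_ω : ω is a model of ⋀R(K) ∧ ⋀_{(o,o′)∈∼}(R(o)↔R(o′))} and μ_ω is the o-interpretation defined by μ_ω(o)=ω(R(o)) for each o∈Occ(K). -/

import Mathlib

namespace Occ

/-- Propositional formulas over variables indexed by `ℕ`,
built from variables using negation and conjunction. -/
inductive Form : Type where
  | var : ℕ → Form
  | neg : Form → Form
  | conj : Form → Form → Form
deriving DecidableEq

/-- Boolean evaluation of a formula under an interpretation `w`. -/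
def eval (w : ℕ → Bool) : Form → Bool
  | .var p => w p
  | .neg φ => !(eval w φ)
  | .conj φ ψ => eval w φ && eval w ψ

/-- The variables occurring in a formula. -/
def vars : Form → Finset ℕ
  | .var p => {p}
  | .neg φ => vars φ
  | .conj φ ψ => vars φ ∪ vars ψ

/-- A step in a path addressing a subformula occurrence. -/
inductive Step : Type where
  | neg | left | right
deriving DecidableEq

/-- `occAt φ l pol = some (p, pol')` iff the path `l` addresses an occurrence of the
variable `p` in `φ`, and this occurrence has polarity `pol'` (`true` = positive)
when the ambient polarity of `φ` is `pol`. -/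
def occAt : Form → List Step → Bool → Option (ℕ × Bool)
  | .var p, [], pol => some (p, pol)
  | .neg φ, .neg :: l, pol => occAt φ l (!pol)
  | .conj φ _, .left :: l, pol => occAt φ l pol
  | .conj _ ψ, .right :: l, pol => occAt ψ l pol
  | _, _, _ => none

/-- A variable occurrence in a base: a formula together with a path into it. -/
abbrev Occurrence : Type := Form × List Step

/-- A propositional base: a finite set of formulas. -/
abbrev PB : Type := Finset Form

/-- `o` is a variable occurrence in the base `K`. -/
def IsOcc (K : PB) (o : Occurrence) : Prop :=
  o.1 ∈ K ∧ ∃ p pol, occAt o.1 o.2 true = some (p, pol)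

/-- `o` is an occurrence of the variable `p` in `K`, of polarity `pol`. -/
def IsOccOf (K : PB) (o : Occurrence) (p : ℕ) (pol : Bool) : Prop :=
  o.1 ∈ K ∧ occAt o.1 o.2 true = some (p, pol)

/-- `o` is an occurrence of the variable `p` in `K`. -/
def IsOccVar (K : PB) (o : Occurrence) (p : ℕ) : Prop :=
  ∃ pol, IsOccOf K o p pol

/-- `o` is a positive variable occurrence in `K`. -/
def IsPosOcc (K : PB) (o : Occurrence) : Prop := ∃ p, IsOccOf K o p true

/-- `o` is a negative variable occurrence in `K`. -/
def IsNegOcc (K : PB) (o : Occurrence) : Prop := ∃ p, IsOccOf K o p false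

/-- `o` and `o'` are occurrences of the same variable. -/
def sameVar (o o' : Occurrence) : Prop :=
  ∃ p pol pol', occAt o.1 o.2 true = some (p, pol) ∧ occAt o'.1 o'.2 true = some (p, pol')

/-- The variables occurring in a base. -/
def varsPB (K : PB) : Finset ℕ := K.sup vars

/-- `w` is a (Boolean) model of the base `K` (i.e. of the conjunction of its formulas). -/
def modelsPB (w : ℕ → Bool) (K : PB) : Prop := ∀ φ ∈ K, eval w φ = true

/-- A base is consistent iff the conjunction of its formulas has a model. -/
def ConsistentPB (K : PB) : Prop := ∃ w, modelsPB w K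

/-- Classical entailment from a base. -/
def Entails (K : PB) (φ : Form) : Prop := ∀ w, modelsPB w K → eval w φ = true

/-- Rename every variable occurrence of a formula, the new variable of the
occurrence at path `l` being `f l`. -/
def renameBy : (List Step → ℕ) → Form → Form
  | f, .var _ => .var (f [])
  | f, .neg φ => .neg (renameBy (fun l => f (.neg :: l)) φ)
  | f, .conj φ ψ =>
      .conj (renameBy (fun l => f (.left :: l)) φ) (renameBy (fun l => f (.right :: l)) ψ)

/-- The formula `φ` (viewed as a member of a base) with each occurrence `o`
replaced by the variable `R o`. -/
def renameForm (R : Occurrence → ℕ) (φ : Form) : Form :=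
  renameBy (fun l => R (φ, l)) φ

/-- A C-renaming of `K`: it assigns a pairwise distinct fresh variable to each
occurrence of `K`. -/
structure IsCRenaming (K : PB) (R : Occurrence → ℕ) : Prop where
  fresh : ∀ o, IsOcc K o → R o ∉ varsPB K
  inj : ∀ o o', IsOcc K o → IsOcc K o' → R o = R o' → o = o'

/-- Binary relations on occurrences, viewed as sets of ordered pairs. -/
abbrev Rel : Type := Set (Occurrence × Occurrence)

/-- `r` is an equivalence relation on `Occ(K)`. -/
structure IsEquivOn (K : PB) (r : Rel) : Prop where
  dom : ∀ q ∈ r, IsOcc K q.1 ∧ IsOcc K q.2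
  refl : ∀ o, IsOcc K o → (o, o) ∈ r
  symm : ∀ q ∈ r, (q.2, q.1) ∈ r
  trans : ∀ a b c : Occurrence, (a, b) ∈ r → (b, c) ∈ r → (a, c) ∈ r

/-- Compliance: related occurrences are occurrences of the same variable. -/
def Compliant (r : Rel) : Prop := ∀ q ∈ r, sameVar q.1 q.2

/-- Consistency of the formula `⋀R(K) ∧ ⋀_{(o,o')∈r} (R(o) ↔ R(o'))`. -/
def RelConsistent (K : PB) (R : Occurrence → ℕ) (r : Rel) : Prop :=
  ∃ w : ℕ → Bool, (∀ φ ∈ K, eval w (renameForm R φ) = true) ∧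
    ∀ q ∈ r, w (R q.1) = w (R q.2)

/-- Minimal Inconsistency Relation of `K` (w.r.t. the C-renaming `R`). -/
def IsMIR (K : PB) (R : Occurrence → ℕ) (r : Rel) : Prop :=
  IsEquivOn K r ∧ Compliant r ∧ ¬ RelConsistent K R r ∧
    ∀ r', IsEquivOn K r' → Compliant r' → ¬ RelConsistent K R r' → ¬ r' ⊂ r

/-- Maximal Consistency Relation of `K` (w.r.t. the C-renaming `R`). -/
def IsMCR (K : PB) (R : Occurrence → ℕ) (r : Rel) : Prop :=
  IsEquivOn K r ∧ Compliant r ∧ RelConsistent K R r ∧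
    ∀ r', IsEquivOn K r' → Compliant r' → RelConsistent K R r' → ¬ r ⊂ r'

/-- The relation `∼_c^K`: relating occurrences of `K` of the same variable. -/
def sameVarRel (K : PB) : Rel :=
  {q | IsOcc K q.1 ∧ IsOcc K q.2 ∧ sameVar q.1 q.2}

/-- `PN(r)`: related pairs consisting of a positive and a negative occurrence. -/
def PN (K : PB) (r : Rel) : Rel :=
  {q | q ∈ r ∧ IsPosOcc K q.1 ∧ IsNegOcc K q.2}

/-- A BMCR: an MCR satisfying Maximality-2. -/
def IsBMCR (K : PB) (R : Occurrence → ℕ) (r : Rel) : Prop :=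
  IsMCR K R r ∧
    ∀ r', IsEquivOn K r' → Compliant r' → RelConsistent K R r' → ¬ PN K r ⊂ PN K r'

/-- `H` is a hitting set of the collection `S`. -/
def IsHittingSet {α : Type} (S : Set (Set α)) (H : Set α) : Prop :=
  ∀ s ∈ S, (s ∩ H).Nonempty

/-- `H` is a minimal hitting set of the collection `S`. -/
def IsMinHittingSet {α : Type} (S : Set (Set α)) (H : Set α) : Prop :=
  IsHittingSet S H ∧ ∀ H', H' ⊂ H → ¬ IsHittingSet S H'

/-- `r` is `H`-maximal (for an equivalence relation `r ⊆ ∼_c^K`). -/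
def IsHMaximal (K : PB) (H r : Rel) : Prop :=
  r ∩ H = ∅ ∧
    ∀ r', IsEquivOn K r' → r' ⊆ sameVarRel K → r ⊂ r' → (r' ∩ H).Nonempty

/-- `r` is `H`-minimal (for an equivalence relation `r ⊆ ∼_c^K`). -/
def IsHMinimal (K : PB) (H r : Rel) : Prop :=
  H ⊆ r ∧ ∀ r', IsEquivOn K r' → r' ⊂ r → ¬ H ⊆ r'

/-- The set of all MIRs of `K`. -/
def MIRs (K : PB) (R : Occurrence → ℕ) : Set Rel := {r | IsMIR K R r}

/-- The set of all C-MCRs of `K`: relations `θ ⊆ ∼_c^K` with `∼_c^K ∖ θ` an MCR. -/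
def CMCRs (K : PB) (R : Occurrence → ℕ) : Set Rel :=
  {θ | θ ⊆ sameVarRel K ∧ IsMCR K R (sameVarRel K \ θ)}

/-- `ρ` is a `∼`-renaming for the equivalence relation `r` on `Occ(K)`:
it assigns a distinct variable to each equivalence class (so it is constant on
classes and distinguishes distinct classes), and any class containing all the
occurrences of a variable `p` is mapped to `p` itself. -/
def IsClassRenaming (K : PB) (r : Rel) (ρ : Occurrence → ℕ) : Prop :=
  (∀ o o', IsOcc K o → IsOcc K o' → (ρ o = ρ o' ↔ (o, o') ∈ r)) ∧
    (∀ o p, IsOccVar K o p → (∀ o', IsOccVar K o' p → (o, o') ∈ r) → ρ o = p)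

/-- `σ` encodes a tuple `(q₁,…,q_m) ∈ P(ρ_∼, S)` where `S = (p₁,…,p_m)`
enumerates `var(K) ∩ var(φ)`: it maps each shared variable `p` to a member of
`⌈ρ⌉(p)` and is the identity elsewhere. -/
def IsTupleChoice (K : PB) (φ : Form) (ρ : Occurrence → ℕ) (σ : ℕ → ℕ) : Prop :=
  (∀ p, p ∈ varsPB K → p ∈ vars φ → ∃ o, IsOccVar K o p ∧ σ p = ρ o) ∧
    (∀ p, ¬ (p ∈ varsPB K ∧ p ∈ vars φ) → σ p = p)

/-- Simultaneous substitution of variables by variables. -/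
def substV (σ : ℕ → ℕ) : Form → Form
  | .var p => .var (σ p)
  | .neg φ => .neg (substV σ φ)
  | .conj φ ψ => .conj (substV σ φ) (substV σ ψ)

/-- `ρ_∼(K) ⊢ ψ`. -/
def rhoEntails (K : PB) (ρ : Occurrence → ℕ) (ψ : Form) : Prop :=
  ∀ w : ℕ → Bool, (∀ φ ∈ K, eval w (renameForm ρ φ) = true) → eval w ψ = true

/-- The inference relation `K ⊩₁ φ`. -/
def Inf1 (K : PB) (R : Occurrence → ℕ) (φ : Form) : Prop :=
  ∀ r ρ, IsMCR K R r → IsClassRenaming K r ρ →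
    ∃ σ, IsTupleChoice K φ ρ σ ∧ rhoEntails K ρ (substV σ φ)

/-- The inference relation `K ⊩₂ φ`. -/
def Inf2 (K : PB) (R : Occurrence → ℕ) (φ : Form) : Prop :=
  ∀ r ρ, IsMCR K R r → IsClassRenaming K r ρ →
    ∀ σ, IsTupleChoice K φ ρ σ → rhoEntails K ρ (substV σ φ)

/-- The inference relation `K ⊩₁^B φ`. -/
def Inf1B (K : PB) (R : Occurrence → ℕ) (φ : Form) : Prop :=
  ∀ r ρ, IsBMCR K R r → IsClassRenaming K r ρ →
    ∃ σ, IsTupleChoice K φ ρ σ ∧ rhoEntails K ρ (substV σ φ)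

/-- The inference relation `K ⊩₂^B φ`. -/
def Inf2B (K : PB) (R : Occurrence → ℕ) (φ : Form) : Prop :=
  ∀ r ρ, IsBMCR K R r → IsClassRenaming K r ρ →
    ∀ σ, IsTupleChoice K φ ρ σ → rhoEntails K ρ (substV σ φ)

/-- `μ` is an o-model of `K`: any interpretation `w` with `w (R o) = μ o` for all
occurrences `o` of `K` is a model of `⋀R(K)`. -/
def OModel (K : PB) (R : Occurrence → ℕ) (μ : Occurrence → Bool) : Prop :=
  ∀ w : ℕ → Bool, (∀ o, IsOcc K o → w (R o) = μ o) →
    ∀ φ ∈ K, eval w (renameForm R φ) = true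

/-- `diff_a(μ)`: pairs of occurrences of the same variable on which `μ` differs. -/
def diffA (K : PB) (μ : Occurrence → Bool) : Rel :=
  {q | IsOcc K q.1 ∧ IsOcc K q.2 ∧ sameVar q.1 q.2 ∧ μ q.1 ≠ μ q.2}

/-- `μ` is an a-minimal o-model of `K`. -/
def AMinOModel (K : PB) (R : Occurrence → ℕ) (μ : Occurrence → Bool) : Prop :=
  OModel K R μ ∧ ∀ μ', OModel K R μ' → ¬ diffA K μ' ⊂ diffA K μ

/-- A Boolean interpretation `w` is compatible with an o-interpretation `μ`. -/
def Compatible (K : PB) (μ : Occurrence → Bool) (w : ℕ → Bool) : Prop :=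
  ∀ p ∈ varsPB K, ∃ o, IsOccVar K o p ∧ w p = μ o

/-- The inference relation `K ⊩_{a1} φ`. -/
def InfA1 (K : PB) (R : Occurrence → ℕ) (φ : Form) : Prop :=
  ∀ μ, AMinOModel K R μ → ∃ w, Compatible K μ w ∧ eval w φ = true

/-- The inference relation `K ⊩_{a2} φ`. -/
def InfA2 (K : PB) (R : Occurrence → ℕ) (φ : Form) : Prop :=
  ∀ μ, AMinOModel K R μ → ∀ w, Compatible K μ w → eval w φ = true

/-- LP_m evaluation: an LP_m interpretation assigns a (nonempty) set of truth
values to each variable; it extends to formulas pointwise. -/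
def lpEval (lam : ℕ → Set Bool) : Form → Set Bool
  | .var p => lam p
  | .neg φ => (fun v => !v) '' lpEval lam φ
  | .conj φ ψ => Set.image2 (· && ·) (lpEval lam φ) (lpEval lam ψ)

/-- `lam` is an LP_m interpretation: each variable gets a nonempty set of values. -/
def IsLPInterp (lam : ℕ → Set Bool) : Prop := ∀ p, (lam p).Nonempty

/-- `lam` is an LP_m model of `⋀K`. -/
def LPModelPB (lam : ℕ → Set Bool) (K : PB) : Prop := ∀ φ ∈ K, true ∈ lpEval lam φ

/-- `λ! = {p : λ(p) = {0,1}}`. -/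
def lpBang (lam : ℕ → Set Bool) : Set ℕ := {p | lam p = Set.univ}

/-- `lam` is a minimal LP_m model of `⋀K`. -/
def MinLPModelPB (K : PB) (lam : ℕ → Set Bool) : Prop :=
  IsLPInterp lam ∧ LPModelPB lam K ∧
    ∀ lam', IsLPInterp lam' → LPModelPB lam' K → ¬ lpBang lam' ⊂ lpBang lam

/-- `K ⊢_{LPm} φ`. -/
def LPmEntails (K : PB) (φ : Form) : Prop :=
  ∀ lam, MinLPModelPB K lam → true ∈ lpEval lam φ

/-- Replace the subformula occurrence of `φ` addressed by the path `l` by `ψ`. -/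
def replaceAt : Form → List Step → Form → Form
  | _, [], ψ => ψ
  | .neg φ, .neg :: l, ψ => .neg (replaceAt φ l ψ)
  | .conj φ χ, .left :: l, ψ => .conj (replaceAt φ l ψ) χ
  | .conj φ χ, .right :: l, ψ => .conj φ (replaceAt χ l ψ)
  | φ, _, _ => φ

/-- The equivalence relation `∼_λ` induced on `Occ(K)` by an LP_m interpretation:
its classes are `Occ(p,K)` for `|λ(p)| = 1` and `PosOcc(p,K)`, `NegOcc(p,K)` for
`λ(p) = {0,1}`. -/
def lamRel (K : PB) (lam : ℕ → Set Bool) : Rel :=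
  {q | ∃ p pol pol', IsOccOf K q.1 p pol ∧ IsOccOf K q.2 p pol' ∧
    (lam p = Set.univ → pol = pol')}

open scoped Classical in
/-- The o-interpretation `μ_λ^K` associated with an LP_m interpretation `λ`. -/
noncomputable def muOf (lam : ℕ → Set Bool) (o : Occurrence) : Bool :=
  match occAt o.1 o.2 true with
  | some (p, pol) =>
      if lam p = ({false} : Set Bool) then false
      else if lam p = ({true} : Set Bool) then true
      else pol
  | none => false


theorem eval_renameBy_congr {w w' : ℕ → Bool} :
    ∀ (φ : Form) (f : List Step → ℕ) (pol : Bool),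
      (∀ l, (occAt φ l pol).isSome → w (f l) = w' (f l)) →
        eval w (renameBy f φ) = eval w' (renameBy f φ)
  | .var _, _, _, h => h [] rfl
  | .neg φ, f, pol, h => by
    simp only [renameBy, eval]
    rw [eval_renameBy_congr φ _ (!pol) fun l hl => h (.neg :: l) hl]
  | .conj φ ψ, f, pol, h => by
    simp only [renameBy, eval]
    rw [eval_renameBy_congr φ _ pol fun l hl => h (.left :: l) hl,
      eval_renameBy_congr ψ _ pol fun l hl => h (.right :: l) hl]

theorem eval_renameForm_congr {K : PB} {R : Occurrence → ℕ} {w w' : ℕ → Bool} {φ : Form}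
    (hφ : φ ∈ K) (h : ∀ o, IsOcc K o → w (R o) = w' (R o)) :
    eval w (renameForm R φ) = eval w' (renameForm R φ) :=
  eval_renameBy_congr φ _ true fun l hl =>
    let ⟨⟨p, pol⟩, hp⟩ := Option.isSome_iff_exists.mp hl
    h (φ, l) ⟨hφ, p, pol, hp⟩

theorem oModel_of_models {K : PB} {R : Occurrence → ℕ} {w : ℕ → Bool}
    (hw : ∀ φ ∈ K, eval w (renameForm R φ) = true) : OModel K R (fun o => w (R o)) :=
  fun _ hw' φ hφ => (eval_renameForm_congr hφ hw').trans (hw φ hφ)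

theorem exists_models_of_oModel {K : PB} {R : Occurrence → ℕ} {μ : Occurrence → Bool}
    (hR : Set.InjOn R {o | IsOcc K o}) (hμ : OModel K R μ) :
    ∃ w : ℕ → Bool, (∀ φ ∈ K, eval w (renameForm R φ) = true) ∧
      ∀ o, IsOcc K o → w (R o) = μ o := by
  have : Nonempty Occurrence := ⟨(.var 0, [])⟩
  let w := fun x => μ (Function.invFunOn R {o | IsOcc K o} x)
  have hw : ∀ o, IsOcc K o → w (R o) = μ o :=
    fun o ho => congrArg μ (hR.leftInvOn_invFunOn ho)
  exact ⟨w, hμ w hw, hw⟩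

theorem sameVar_refl {K : PB} {o : Occurrence} (ho : IsOcc K o) : sameVar o o :=
  let ⟨p, pol, hp⟩ := ho.2
  ⟨p, pol, pol, hp, hp⟩

theorem sameVar.symm {o o' : Occurrence} : sameVar o o' → sameVar o' o
  | ⟨p, pol, pol', h, h'⟩ => ⟨p, pol', pol, h', h⟩

theorem sameVar.trans {a b c : Occurrence} : sameVar a b → sameVar b c → sameVar a c
  | ⟨p, pol, _, ha, hb⟩, ⟨_, _, pol', hb', hc⟩ => by
    obtain ⟨rfl, -⟩ := Prod.mk.inj (Option.some.inj (hb.symm.trans hb'))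
    exact ⟨p, pol, pol', ha, hc⟩

theorem diffA_subset_sameVarRel (K : PB) (μ : Occurrence → Bool) :
    diffA K μ ⊆ sameVarRel K :=
  fun _ hq => ⟨hq.1, hq.2.1, hq.2.2.1⟩

theorem mem_sameVarRel_sdiff_diffA {K : PB} {μ : Occurrence → Bool}
    {q : Occurrence × Occurrence} :
    q ∈ sameVarRel K \ diffA K μ ↔
      IsOcc K q.1 ∧ IsOcc K q.2 ∧ sameVar q.1 q.2 ∧ μ q.1 = μ q.2 := by
  simp only [sameVarRel, diffA, Set.mem_sdiff, Set.mem_ofPred_eq]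
  tauto

theorem isEquivOn_sameVarRel_sdiff_diffA (K : PB) (μ : Occurrence → Bool) :
    IsEquivOn K (sameVarRel K \ diffA K μ) where
  dom _ hq := ⟨hq.1.1, hq.1.2.1⟩
  refl _ ho := mem_sameVarRel_sdiff_diffA.mpr ⟨ho, ho, sameVar_refl ho, rfl⟩
  symm _ hq :=
    let ⟨h1, h2, hs, he⟩ := mem_sameVarRel_sdiff_diffA.mp hq
    mem_sameVarRel_sdiff_diffA.mpr ⟨h2, h1, hs.symm, he.symm⟩
  trans _ _ _ hab hbc :=
    let ⟨ha, _, hsab, heab⟩ := mem_sameVarRel_sdiff_diffA.mp hab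
    let ⟨_, hc, hsbc, hebc⟩ := mem_sameVarRel_sdiff_diffA.mp hbc
    mem_sameVarRel_sdiff_diffA.mpr ⟨ha, hc, hsab.trans hsbc, heab.trans hebc⟩

theorem compliant_sameVarRel_sdiff_diffA (K : PB) (μ : Occurrence → Bool) :
    Compliant (sameVarRel K \ diffA K μ) :=
  fun _ hq => hq.1.2.2

theorem relConsistent_sameVarRel_sdiff_diffA {K : PB} {R : Occurrence → ℕ}
    {μ : Occurrence → Bool} (hR : Set.InjOn R {o | IsOcc K o}) (hμ : OModel K R μ) :
    RelConsistent K R (sameVarRel K \ diffA K μ) := by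
  obtain ⟨w, hwK, hwμ⟩ := exists_models_of_oModel hR hμ
  refine ⟨w, hwK, fun q hq => ?_⟩
  obtain ⟨h1, h2, -, heq⟩ := mem_sameVarRel_sdiff_diffA.mp hq
  rw [hwμ _ h1, hwμ _ h2, heq]

theorem subset_sameVarRel_sdiff_diffA {K : PB} {μ : Occurrence → Bool} {r : Rel}
    (hr : IsEquivOn K r) (hc : Compliant r) (hμ : ∀ q ∈ r, μ q.1 = μ q.2) :
    r ⊆ sameVarRel K \ diffA K μ :=
  fun q hq => mem_sameVarRel_sdiff_diffA.mpr
    ⟨(hr.dom q hq).1, (hr.dom q hq).2, hc q hq, hμ q hq⟩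

theorem sameVarRel_sdiff_diffA_ssubset {K : PB} {μ μ' : Occurrence → Bool}
    (h : diffA K μ' ⊂ diffA K μ) :
    sameVarRel K \ diffA K μ ⊂ sameVarRel K \ diffA K μ' := by
  obtain ⟨q, hq, hq'⟩ := Set.exists_of_ssubset h
  exact ⟨Set.sdiff_subset_sdiff_right h.subset,
    fun hsub => (hsub ⟨diffA_subset_sameVarRel K μ hq, hq'⟩).2 hq⟩

end Occ

/-- Proposition 13: if `r` is an MCR of `K`, every element
`μ_ω` of `OM(r)` — where `ω` is a model of `⋀R(K) ∧ ⋀_{(o,o')∈r}(R(o)↔R(o'))`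
and `μ_ω(o) = ω(R(o))` — is an a-minimal o-model of `K`. -/
theorem MCR_models_are_aMinimal (K : Occ.PB)
    (R : Occ.Occurrence → ℕ) (hR : Occ.IsCRenaming K R)
    (r : Occ.Rel) (hr : Occ.IsMCR K R r) (w : ℕ → Bool)
    (hw1 : ∀ φ ∈ K, Occ.eval w (Occ.renameForm R φ) = true)
    (hw2 : ∀ q ∈ r, w (R q.1) = w (R q.2)) :
    Occ.AMinOModel K R (fun o => w (R o)) := by
  obtain ⟨hequiv, hcompl, -, hmax⟩ := hr
  refine ⟨Occ.oModel_of_models hw1, fun μ' hμ' hlt => ?_⟩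
  -- If `μ'` had fewer disagreements, the relation "same variable, same `μ'`-value" would be a
  -- consistent equivalence strictly extending the maximal `r`.
  have hinj : Set.InjOn R {o | Occ.IsOcc K o} := fun o ho o' ho' => hR.inj o o' ho ho'
  exact hmax _ (Occ.isEquivOn_sameVarRel_sdiff_diffA K μ')
    (Occ.compliant_sameVarRel_sdiff_diffA K μ')
    (Occ.relConsistent_sameVarRel_sdiff_diffA hinj hμ')
    ((Occ.subset_sameVarRel_sdiff_diffA hequiv hcompl hw2).trans_ssubset
      (Occ.sameVarRel_sdiff_diffA_ssubset hlt))
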